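/- Let h be a harmonic function on ℂ with h(z) ≤ A(1 + |z|) for all z (some constant A) and sup_{x ∈ ℝ} h(x) < ∞. Then h(z) = a + b·Im z for some real constants a, b. -/

import Mathlib

/-!
Integrating the circle mean-value property over the radius gives the area mean-value property.
For `u ≥ 0` harmonic, comparing its integrals over `ball z₂ R ⊆ ball z₁ (R + |z₁ - z₂|)` gives the
Harnack inequality `R² u(z₂) ≤ (R + |z₁ - z₂|)² u(z₁)`. Applied to `M - h`, with `M` the bound
`h ≤ a + b|z|` on the larger ball, and letting `R → ∞`, it shows `h(z₁) - h(z₂) ≤ 2b|z₁ - z₂|`.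
So every difference `h(· + v) - h` is harmonic and bounded above, hence constant by the same
estimate with `b = 0`; thus `h - h(0)` is additive and continuous, i.e. `ℝ`-linear, and
boundedness on the real axis kills its `Re z` coefficient.
-/

open Real Filter MeasureTheory

/-- A real-valued function on `ℂ` is harmonic if it is continuous and satisfies
the circle mean-value property. -/
def HarmonicPlane (h : ℂ → ℝ) : Prop :=
  Continuous h ∧
    ∀ c : ℂ, ∀ r : ℝ, 0 < r →
      h c = (2 * π)⁻¹ * ∫ θ in (0:ℝ)..(2 * π), h (c + r * Complex.exp (θ * Complex.I))

open Metric Set Topology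

theorem harmonicPlane_iff_circleAverage {h : ℂ → ℝ} :
    HarmonicPlane h ↔ Continuous h ∧ ∀ c : ℂ, ∀ r : ℝ, 0 < r → h c = circleAverage h c r :=
  Iff.rfl

theorem Complex.continuous_polarCoord_symm : Continuous Complex.polarCoord.symm := by
  rw [funext Complex.polarCoord_symm_apply]
  fun_prop

theorem Complex.polarCoord_symm_eq_circleMap (r θ : ℝ) :
    Complex.polarCoord.symm (r, θ) = circleMap 0 r θ := by
  simp [circleMap, Complex.exp_mul_I]

theorem Complex.polarCoord_target_inter_preimage_symm_ball (R : ℝ) :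
    polarCoord.target ∩ Complex.polarCoord.symm ⁻¹' ball 0 R = Ioo 0 R ×ˢ Ioo (-π) π := by
  ext ⟨r, θ⟩
  by_cases hr : 0 < r
  · simp [polarCoord_target, hr, abs_of_pos hr, and_comm]
  · simp [polarCoord_target, hr]

theorem integral_Ioo_neg_pi_pi_circleMap (f : ℂ → ℝ) (c : ℂ) (r : ℝ) :
    ∫ θ in Ioo (-π) π, f (circleMap c r θ) = 2 * π * circleAverage f c r := by
  have hper : Function.Periodic (fun θ => f (circleMap c r θ)) (2 * π) :=
    fun θ => by simp [periodic_circleMap c r θ]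
  rw [← integral_Ioc_eq_integral_Ioo, ← intervalIntegral.integral_of_le (by linarith [pi_pos]),
    circleAverage_def, smul_eq_mul, mul_inv_cancel_left₀ (by positivity)]
  simpa [show -π + 2 * π = π by ring] using hper.intervalIntegral_add_eq (-π) 0

theorem setIntegral_ball_zero_eq_integral_circleAverage {f : ℂ → ℝ} (hf : Continuous f) {R : ℝ}
    (hR : 0 ≤ R) : ∫ z in ball 0 R, f z = ∫ r in 0..R, 2 * π * r * circleAverage f 0 r := by
  have hint : IntegrableOn (fun p : ℝ × ℝ => p.1 * f (Complex.polarCoord.symm p))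
      (Icc 0 R ×ˢ Icc (-π) π) :=
    ContinuousOn.integrableOn_compact (isCompact_Icc.prod isCompact_Icc)
      (continuous_fst.mul (hf.comp Complex.continuous_polarCoord_symm)).continuousOn
  calc ∫ z in ball 0 R, f z
      = ∫ p in polarCoord.target, p.1 • (ball 0 R).indicator f (Complex.polarCoord.symm p) := by
        rw [Complex.integral_comp_polarCoord_symm, integral_indicator measurableSet_ball]
    _ = ∫ p in Ioo 0 R ×ˢ Ioo (-π) π, p.1 * f (Complex.polarCoord.symm p) := by
        rw [← Complex.polarCoord_target_inter_preimage_symm_ball, ← setIntegral_indicator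
          (measurableSet_ball.preimage Complex.continuous_polarCoord_symm.measurable)]
        congr 1 with p
        by_cases hp : Complex.polarCoord.symm p ∈ ball 0 R
        · rw [indicator_of_mem hp, indicator_of_mem (mem_preimage.2 hp), smul_eq_mul]
        · rw [indicator_of_notMem hp, indicator_of_notMem (mt mem_preimage.1 hp), smul_zero]
    _ = ∫ r in Ioo 0 R, ∫ θ in Ioo (-π) π, r * f (Complex.polarCoord.symm (r, θ)) := by
        rw [Measure.volume_eq_prod, setIntegral_prod]
        exact hint.mono_set (prod_mono Ioo_subset_Icc_self Ioo_subset_Icc_self)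
    _ = ∫ r in 0..R, 2 * π * r * circleAverage f 0 r := by
        simp_rw [integral_const_mul, Complex.polarCoord_symm_eq_circleMap,
          integral_Ioo_neg_pi_pi_circleMap]
        rw [intervalIntegral.integral_of_le hR, integral_Ioc_eq_integral_Ioo]
        congr 1 with r
        ring

theorem setIntegral_ball_eq_integral_circleAverage {f : ℂ → ℝ} (hf : Continuous f) (c : ℂ)
    {R : ℝ} (hR : 0 ≤ R) : ∫ z in ball c R, f z = ∫ r in 0..R, 2 * π * r * circleAverage f c r := by
  have h₀ := setIntegral_ball_zero_eq_integral_circleAverage (hf.comp (continuous_add_const c)) hR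
  simp only [Function.comp_def, circleAverage_map_add_const] at h₀
  rw [← h₀, ← (measurePreserving_add_right volume c).setIntegral_preimage_emb
    (measurableEmbedding_addRight c), preimage_add_right_ball, sub_self]

theorem ContinuousLinearMap.apply_eq_re_mul_add_im_mul (L : ℂ →L[ℝ] ℝ) (z : ℂ) :
    L z = z.re * L 1 + z.im * L Complex.I := by
  conv_lhs => rw [← Complex.re_add_im z, ← mul_one (z.re : ℂ), ← Complex.real_smul,
    ← Complex.real_smul]
  simp only [map_add, map_smul, smul_eq_mul]

namespace HarmonicPlane

variable {f g h : ℂ → ℝ}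

theorem const (a : ℝ) : HarmonicPlane fun _ => a :=
  harmonicPlane_iff_circleAverage.2
    ⟨continuous_const, fun c r _ => (circleAverage_const a c r).symm⟩

theorem sub (hf : HarmonicPlane f) (hg : HarmonicPlane g) : HarmonicPlane fun z => f z - g z := by
  rw [harmonicPlane_iff_circleAverage] at *
  refine ⟨hf.1.sub hg.1, fun c r hr => ?_⟩
  rw [circleAverage_fun_sub hf.1.continuousOn.circleIntegrable' hg.1.continuousOn.circleIntegrable',
    ← hf.2 c r hr, ← hg.2 c r hr]

theorem comp_add_right (hh : HarmonicPlane h) (v : ℂ) : HarmonicPlane fun z => h (z + v) := by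
  rw [harmonicPlane_iff_circleAverage] at *
  refine ⟨hh.1.comp (continuous_add_const v), fun c r hr => ?_⟩
  rw [hh.2 (c + v) r hr]
  simp only [circleAverage_def, circleMap, add_right_comm]

theorem setIntegral_ball (hh : HarmonicPlane h) (c : ℂ) {R : ℝ} (hR : 0 ≤ R) :
    ∫ z in ball c R, h z = π * R ^ 2 * h c := by
  rw [setIntegral_ball_eq_integral_circleAverage hh.1 c hR]
  calc ∫ r in 0..R, 2 * π * r * circleAverage h c r = ∫ r in 0..R, 2 * π * h c * r := by
        refine intervalIntegral.integral_congr_ae (.of_forall fun r hr => ?_)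
        rw [uIoc_of_le hR] at hr
        rw [← (harmonicPlane_iff_circleAverage.1 hh).2 c r hr.1]
        ring
    _ = π * R ^ 2 * h c := by
        rw [intervalIntegral.integral_const_mul, integral_id]
        ring

theorem harnack (hh : HarmonicPlane h) {c₁ c₂ : ℂ} {R : ℝ} (hR : 0 ≤ R)
    (hh₀ : ∀ z ∈ ball c₁ (R + dist c₂ c₁), 0 ≤ h z) :
    R ^ 2 * h c₂ ≤ (R + dist c₂ c₁) ^ 2 * h c₁ := by
  have hmono := setIntegral_mono_set (μ := volume)
    ((hh.1.continuousOn.integrableOn_compact (isCompact_closedBall c₁ (R + dist c₂ c₁))).mono_set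
      ball_subset_closedBall)
    ((ae_restrict_iff' measurableSet_ball).2 (.of_forall hh₀))
    (ball_subset_ball' (ε₁ := R) le_rfl).eventuallyLE
  rw [hh.setIntegral_ball c₂ hR, hh.setIntegral_ball c₁ (by positivity), mul_assoc, mul_assoc]
    at hmono
  exact le_of_mul_le_mul_left hmono pi_pos

theorem sub_le_of_le_add_mul_norm (hh : HarmonicPlane h) {a b : ℝ} (hb : 0 ≤ b)
    (hab : ∀ z, h z ≤ a + b * ‖z‖) (c₁ c₂ : ℂ) : h c₁ - h c₂ ≤ 2 * b * dist c₁ c₂ := by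
  set d := dist c₂ c₁
  set K := a + b * (‖c₁‖ + d) - h c₁
  have hbound : ∀ R > 0,
      h c₁ - h c₂ ≤ 2 * b * d + (2 * d * K + b * d ^ 2) / R + d ^ 2 * K / R ^ 2 := by
    intro R hR
    set M := a + b * (‖c₁‖ + R + d)
    have hle : ∀ z ∈ ball c₁ (R + d), h z ≤ M := fun z hz => by
      have : ‖z‖ ≤ ‖c₁‖ + (R + d) := by
        have := norm_le_norm_add_norm_sub' z c₁
        rw [mem_ball, dist_eq_norm] at hz
        linarith
      nlinarith [hab z]
    have key := ((const M).sub hh).harnack hR.le fun z hz => sub_nonneg.2 (hle z hz)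
    have hexpand : 2 * b * d + (2 * d * K + b * d ^ 2) / R + d ^ 2 * K / R ^ 2 =
        ((R + d) ^ 2 - R ^ 2) * (M - h c₁) / R ^ 2 := by
      field_simp
      ring
    rw [hexpand, le_div_iff₀ (by positivity)]
    linarith
  have hlim : Tendsto (fun R => 2 * b * d + (2 * d * K + b * d ^ 2) / R + d ^ 2 * K / R ^ 2)
      atTop (𝓝 (2 * b * d)) := by
    simpa using (tendsto_const_nhds.add (tendsto_const_nhds.div_atTop tendsto_id)).add
      (tendsto_const_nhds.div_atTop (tendsto_pow_atTop (α := ℝ) two_ne_zero))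
  rw [dist_comm]
  exact ge_of_tendsto hlim ((eventually_gt_atTop 0).mono hbound)

theorem eq_of_forall_le (hh : HarmonicPlane h) {M : ℝ} (hM : ∀ z, h z ≤ M) (z w : ℂ) :
    h z = h w := by
  have hlip := hh.sub_le_of_le_add_mul_norm le_rfl (a := M) (by simpa using hM)
  linarith [hlip z w, hlip w z]

theorem exists_continuousLinearMap (hh : HarmonicPlane h) {A : ℝ}
    (hA : ∀ z, h z ≤ A * (1 + ‖z‖)) : ∃ L : ℂ →L[ℝ] ℝ, ∀ z, h z = h 0 + L z := by
  set B := max A 0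
  have hlip : ∀ z w, h z - h w ≤ 2 * B * dist z w :=
    hh.sub_le_of_le_add_mul_norm (le_max_right A 0) fun z => by
      nlinarith [hA z, le_max_left A 0, norm_nonneg z]
  have hincr : ∀ v z, h (z + v) - h z = h v - h 0 := fun v z => by
    simpa using ((hh.comp_add_right v).sub hh).eq_of_forall_le (M := 2 * B * ‖v‖)
      (fun z => by simpa [dist_eq_norm] using hlip (z + v) z) z 0
  let Φ : ℂ →+ ℝ := AddMonoidHom.mk' (fun v => h v - h 0) fun v w => by linarith [hincr w v]
  exact ⟨Φ.toRealLinearMap (hh.1.sub continuous_const), fun z => (add_sub_cancel (h 0) (h z)).symm⟩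

end HarmonicPlane

/-- A harmonic function on `ℂ` with `h(z) ≤ A(1 + |z|)` that is bounded above on
the real axis has the form `h(z) = a + b · Im z`. -/
theorem stmt17 (h : ℂ → ℝ) (hh : HarmonicPlane h) (A : ℝ)
    (hA : ∀ z : ℂ, h z ≤ A * (1 + ‖z‖))
    (hb : BddAbove (Set.range fun x : ℝ => h (x : ℂ))) :
    ∃ a b : ℝ, ∀ z : ℂ, h z = a + b * z.im := by
  obtain ⟨L, hL⟩ := hh.exists_continuousLinearMap hA
  have hlin := L.apply_eq_re_mul_add_im_mul
  have hL1 : L 1 = 0 := by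
    obtain ⟨B, hB⟩ := hb
    by_contra hne
    set x := (B - h 0 + 1) / L 1 with hx
    have hxB : h x ≤ B := hB ⟨x, rfl⟩
    rw [hL, hlin, Complex.ofReal_re, Complex.ofReal_im, hx, div_mul_cancel₀ _ hne] at hxB
    linarith
  exact ⟨h 0, L Complex.I, fun z => by rw [hL, hlin, hL1]; ring⟩
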